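/- For every essential variable x_i of f ∈ P_k^n there exists an implementation of f ending with x_i: that is, there exist distinct variables x_{j_1},...,x_{j_{m-1}} (all different from x_i), constants c_1,...,c_{m-1}, c_i, c ∈ Z_k with m ≤ ess(f), such that each successive variable is essential in the current subfunction, x_i is essential in f(x_{j_1}=c_1,...,x_{j_{m-1}}=c_{m-1}), and substituting x_i = c_i yields the constant c. -/

import Mathlib

open scoped Classical

namespace Paper

/-- A `k`-valued function of `n` variables. -/
abbrev Fn (k n : ℕ) : Type := (Fin n → ZMod k) → ZMod k

/-- `x i` is an essential variable of `f`. -/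
def Essential {k n : ℕ} (f : Fn k n) (i : Fin n) : Prop :=
  ∃ (a : Fin n → ZMod k) (b : ZMod k), f (Function.update a i b) ≠ f a

/-- The set of essential variables of `f`. -/
def Ess {k n : ℕ} (f : Fn k n) : Set (Fin n) := {i | Essential f i}

/-- The subfunction `f(x i = c)`. -/
def substVar {k n : ℕ} (f : Fn k n) (i : Fin n) (c : ZMod k) : Fn k n :=
  fun a => f (Function.update a i c)

/-- Substitute the constants `c` for all variables in the set `J`. -/
noncomputable def substSet {k n : ℕ} (f : Fn k n) (J : Set (Fin n)) (c : Fin n → ZMod k) : Fn k n :=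
  fun a => f (fun i => if i ∈ J then c i else a i)

/-- `g` is a simple subfunction of `f`: obtained by substituting a constant
for an essential variable of `f`. -/
def SimpleSub {k n : ℕ} (g f : Fn k n) : Prop :=
  ∃ i ∈ Ess f, ∃ c : ZMod k, g = substVar f i c

/-- `Sub f` is the set of all subfunctions of `f` (reflexive-transitive closure of
the simple subfunction relation). -/
def Sub {k n : ℕ} (f : Fn k n) : Set (Fn k n) :=
  {g | Relation.ReflTransGen (fun u v => SimpleSub v u) f g}

/-- `M` is a separable set of variables in `f`: `M = Ess g` for some subfunction `g`. -/
def Separable {k n : ℕ} (f : Fn k n) (M : Set (Fin n)) : Prop :=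
  ∃ g ∈ Sub f, Ess g = M

/-- Separability phrased via simultaneous substitution for a set of variables. -/
def SeparableS {k n : ℕ} (f : Fn k n) (M : Set (Fin n)) : Prop :=
  ∃ (J : Set (Fin n)) (c : Fin n → ZMod k), Ess (substSet f J c) = M

/-- `J` is a set of essential variables disjoint from `M` such that every assignment of
constants to `J` destroys some variable of `M`. -/
def Kills {k n : ℕ} (f : Fn k n) (M J : Set (Fin n)) : Prop :=
  J ⊆ Ess f ∧ J ∩ M = ∅ ∧ ∀ c : Fin n → ZMod k, ¬ M ⊆ Ess (substSet f J c)

/-- `Dis f M` : the family of all distributive sets of `M` in `f`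
(inclusion-minimal sets `J` with `Kills f M J`). -/
def Dis {k n : ℕ} (f : Fn k n) (M : Set (Fin n)) : Set (Set (Fin n)) :=
  {J | Kills f M J ∧ ∀ J' ⊆ J, Kills f M J' → J' = J}

/-- `β` is an s-system of the family `F`. -/
def IsSSystem {n : ℕ} (F : Set (Set (Fin n))) (β : Set (Fin n)) : Prop :=
  (∀ P ∈ F, (β ∩ P).Nonempty) ∧ ∀ x ∈ β, ∃ P ∈ F, P ∩ β = {x}

/-- `x i` is a strongly essential variable of `f`. -/
def StronglyEssential {k n : ℕ} (f : Fn k n) (i : Fin n) : Prop :=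
  i ∈ Ess f ∧ ∃ c : ZMod k, Ess (substVar f i c) = Ess f \ {i}

/-- The number of subfunctions of `f` having exactly `m` essential variables. -/
noncomputable def subCount {k n : ℕ} (f : Fn k n) (m : ℕ) : ℕ :=
  Set.ncard {g ∈ Sub f | (Ess g).ncard = m}

/-- `IsImp f l c` : the list `l` of (variable, constant) substitutions together with the
final value `c` is an implementation of `f`, i.e. a root-to-leaf path in a reduced
ordered decision diagram of `f`: each substituted variable is essential in the current
subfunction, and the final subfunction is the constant `c`. -/
inductive IsImp {k n : ℕ} : Fn k n → List (Fin n × ZMod k) → ZMod k → Prop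
  | const (f : Fn k n) (c : ZMod k) : (∀ a, f a = c) → IsImp f [] c
  | step (f : Fn k n) (i : Fin n) (a : ZMod k) (l : List (Fin n × ZMod k)) (c : ZMod k) :
      i ∈ Ess f → IsImp (substVar f i a) l c → IsImp f ((i, a) :: l) c

/-- The number of implementations of `f`. -/
noncomputable def imp {k n : ℕ} (f : Fn k n) : ℕ :=
  Set.ncard {p : List (Fin n × ZMod k) × ZMod k | IsImp f p.1 p.2}

end Paper

/-!
Fixing an essential variable `x j ≠ x i` at its value in a witness `(a, b)` of the essentiality
of `x i` keeps `x i` essential and strictly lowers the number of essential variables, so by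
induction on that number we may fix all other essential variables first and `x i` last. Every
implementation automatically uses distinct variables and has length at most `ess f`, since the
substituted variable is no longer essential in the subfunction.
-/

namespace Paper

variable {k n : ℕ}

lemma ess_substVar_subset (f : Fn k n) (j : Fin n) (c : ZMod k) :
    Ess (substVar f j c) ⊆ Ess f \ {j} := by
  rintro i ⟨a, b, hab⟩
  simp only [substVar] at hab
  have hij : i ≠ j := by
    rintro rfl
    rw [Function.update_idem] at hab
    exact hab rfl
  refine ⟨⟨Function.update a j c, b, ?_⟩, hij⟩
  rwa [Function.update_comm hij] at hab

lemma ncard_ess_substVar_lt {f : Fn k n} {j : Fin n} (hj : j ∈ Ess f) (c : ZMod k) :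
    (Ess (substVar f j c)).ncard < (Ess f).ncard :=
  Set.ncard_lt_ncard <| (ess_substVar_subset f j c).trans_ssubset <|
    Set.sdiff_singleton_ssubset.2 hj

lemma mem_ess_substVar_of_update_ne {f : Fn k n} {i j : Fin n} {a : Fin n → ZMod k}
    {b : ZMod k} (hab : f (Function.update a i b) ≠ f a) (hji : j ≠ i) :
    i ∈ Ess (substVar f j (a j)) := by
  refine ⟨a, b, ?_⟩
  simpa only [substVar, Function.update_comm hji.symm, Function.update_eq_self] using hab

lemma exists_const_of_ess_eq_empty {g : Fn k n} (h : Ess g = ∅) : ∃ c, ∀ a, g a = c := by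
  have hupdate : ∀ j a b, g (Function.update a j b) = g a := fun j a b => by
    by_contra hne
    exact (h ▸ ⟨a, b, hne⟩ : j ∈ (∅ : Set (Fin n)))
  have hpiecewise : ∀ (s : Finset (Fin n)) (a : Fin n → ZMod k), g (s.piecewise 0 a) = g a := by
    intro s a
    induction s using Finset.induction_on with
    | empty => rw [Finset.piecewise_empty]
    | insert j s _ ih => rw [Finset.piecewise_insert, hupdate, ih]
  exact ⟨g 0, fun a => by rw [← hpiecewise Finset.univ a, Finset.piecewise_univ]⟩

namespace IsImp

lemma fst_mem_ess {f : Fn k n} {l : List (Fin n × ZMod k)} {c : ZMod k} (h : IsImp f l c) :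
    ∀ p ∈ l, p.1 ∈ Ess f := by
  induction h with
  | const => simp
  | step f i a l c hi _ ih =>
    rintro p (_ | ⟨_, hp⟩)
    · exact hi
    · exact (ess_substVar_subset f i a (ih p hp)).1

lemma nodup_map_fst {f : Fn k n} {l : List (Fin n × ZMod k)} {c : ZMod k} (h : IsImp f l c) :
    (l.map Prod.fst).Nodup := by
  induction h with
  | const => simp
  | step f i a l c _ hl ih =>
    refine List.nodup_cons.2 ⟨fun hmem => ?_, ih⟩
    obtain ⟨p, hp, rfl⟩ := List.mem_map.1 hmem
    exact (ess_substVar_subset f p.1 a (hl.fst_mem_ess p hp)).2 rfl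

lemma length_le {f : Fn k n} {l : List (Fin n × ZMod k)} {c : ZMod k} (h : IsImp f l c) :
    l.length ≤ (Ess f).ncard := by
  induction h with
  | const => simp
  | step f i a l c hi _ ih => exact ih.trans_lt (ncard_ess_substVar_lt hi a)

end IsImp

lemma exists_isImp_singleton_of_ess_eq_singleton {f : Fn k n} {i : Fin n} (h : Ess f = {i})
    (ci : ZMod k) : ∃ c, IsImp f [(i, ci)] c := by
  have hempty : Ess (substVar f i ci) = ∅ :=
    Set.subset_empty_iff.1 <| by simpa [h] using ess_substVar_subset f i ci
  obtain ⟨c, hc⟩ := exists_const_of_ess_eq_empty hempty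
  exact ⟨c, .step f i ci [] c (h ▸ rfl) (.const _ c hc)⟩

lemma exists_isImp_append_singleton {f : Fn k n} {i : Fin n} (hi : i ∈ Ess f) :
    ∃ (l : List (Fin n × ZMod k)) (ci c : ZMod k), IsImp f (l ++ [(i, ci)]) c := by
  induction hN : (Ess f).ncard using Nat.strong_induction_on generalizing f with
  | _ N ih =>
  by_cases hsingle : Ess f = {i}
  · obtain ⟨c, hc⟩ := exists_isImp_singleton_of_ess_eq_singleton hsingle 0
    exact ⟨[], 0, c, hc⟩
  obtain ⟨j, hj, hji⟩ : ∃ j ∈ Ess f, j ≠ i := by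
    by_contra! hall
    exact hsingle (Set.eq_singleton_iff_unique_mem.2 ⟨hi, hall⟩)
  obtain ⟨a, b, hab⟩ := hi
  obtain ⟨l, ci, c, himp⟩ := ih _ (hN ▸ ncard_ess_substVar_lt hj (a j))
    (mem_ess_substVar_of_update_ne hab hji) rfl
  exact ⟨(j, a j) :: l, ci, c, .step f j (a j) _ c hj himp⟩

end Paper

open Paper in
theorem implementation_ending_with_general {k n : ℕ} (f : Fn k n)
    (i : Fin n) (hi : i ∈ Ess f) :
    ∃ (l : List (Fin n × ZMod k)) (ci c : ZMod k),
      IsImp f (l ++ [(i, ci)]) c ∧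
      ((l ++ [(i, ci)]).map Prod.fst).Nodup ∧
      (l ++ [(i, ci)]).length ≤ (Ess f).ncard := by
  obtain ⟨l, ci, c, himp⟩ := exists_isImp_append_singleton hi
  exact ⟨l, ci, c, himp, himp.nodup_map_fst, himp.length_le⟩

open Paper in
/-- for every essential variable `x i` of `f` there is an implementation of
`f` ending with `x i`: a chain of substitutions of constants for distinct variables, each
essential at the moment of substitution, whose last substituted variable is `x i`,
terminating in a constant, of length at most `ess f`. -/
theorem implementation_ending_with {k n : ℕ} (hk : 2 ≤ k) (f : Fn k n)
    (i : Fin n) (hi : i ∈ Ess f) :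
    ∃ (l : List (Fin n × ZMod k)) (ci c : ZMod k),
      IsImp f (l ++ [(i, ci)]) c ∧
      ((l ++ [(i, ci)]).map Prod.fst).Nodup ∧
      (l ++ [(i, ci)]).length ≤ (Ess f).ncard :=
  implementation_ending_with_general f i hi
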